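/- Let A be a diagonal n×n matrix with diagonal entries in (0,1) and let C₁, C₂ ⊆ B[0,1] be compact sets such that: (i) there exist bounded gaps G¹ of C₁ and G² of C₂ such that closure(G¹) is not contained in any gap of C₂, closure(G²) is not contained in any gap of C₁, ∂G¹ ⊄ E² (the unbounded gap of C₂) and ∂G² ⊄ E¹ (the unbounded gap of C₁); and (ii) for every pair of bounded gaps G¹ of C₁ and G² of C₂, if ∂G¹ ⊆ G² then G¹ ⊆ G², and if ∂G² ⊆ G¹ then G² ⊆ G¹. Then C₁ and C₂ are a strongly refinable pair for A. -/

import Mathlib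

open Metric Set Topology Filter
open scoped ENNReal Classical

noncomputable section

/-- The affine box `A^s(B[0,1]) + z`, where `A` is the diagonal matrix with
diagonal entries `β j`, so `A^s(B[0,1]) + z = {x : |x j - z j| ≤ (β j)^s for all j}`. -/
def affBox {n : ℕ} (β : Fin n → ℝ) (s : ℝ) (z : Fin n → ℝ) : Set (Fin n → ℝ) :=
  {x | ∀ j, |x j - z j| ≤ (β j) ^ s}

/-- The size `S_A(F)` of `F` with respect to the diagonal matrix with entries `β`. -/
def sizeWrt {n : ℕ} (β : Fin n → ℝ) (F : Set (Fin n → ℝ)) : ℝ :=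
  sInf {t | 0 < t ∧ ∃ z, F ⊆ affBox β (1 / t) z}

/-- `G` is a gap (a connected component of the complement) of `C`. -/
def IsGap {n : ℕ} (C G : Set (Fin n → ℝ)) : Prop :=
  ∃ x ∈ Cᶜ, G = connectedComponentIn Cᶜ x

/-- `G` is a bounded gap of `C`. -/
def IsBoundedGap {n : ℕ} (C G : Set (Fin n → ℝ)) : Prop :=
  IsGap C G ∧ Bornology.IsBounded G

/-- The unbounded gap `E` of `C`: the union of the unbounded connected
components of the complement of `C`. -/
def unboundedGap {n : ℕ} (C : Set (Fin n → ℝ)) : Set (Fin n → ℝ) :=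
  {x | x ∈ Cᶜ ∧ ¬ Bornology.IsBounded (connectedComponentIn Cᶜ x)}

/-- An enumeration `(G_k)_{k ∈ J}` of the bounded gaps of `C`, in non-increasing
order of size with respect to `β`. -/
structure GapEnum {n : ℕ} (β : Fin n → ℝ) (C : Set (Fin n → ℝ)) where
  J : Set ℕ
  G : ℕ → Set (Fin n → ℝ)
  downward : ∀ k l : ℕ, k ≤ l → l ∈ J → k ∈ J
  isGap : ∀ k ∈ J, IsBoundedGap C (G k)
  inj : ∀ k ∈ J, ∀ l ∈ J, G k = G l → k = l
  surj : ∀ G', IsBoundedGap C G' → ∃ k ∈ J, G k = G'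
  anti : ∀ k ∈ J, ∀ l ∈ J, k ≤ l → sizeWrt β (G l) ≤ sizeWrt β (G k)

/-- The gap distance `GD_A(m, C)` with respect to the enumeration `e`. -/
def gapDist {n : ℕ} (β : Fin n → ℝ) (C : Set (Fin n → ℝ)) (e : GapEnum β C) (m : ℕ) : ℝ :=
  sInf {t | 0 < t ∧ ∃ z, (affBox β (1 / t) z ∩ e.G m).Nonempty ∧
    (affBox β (1 / t) z ∩ ((⋃ i ∈ e.J ∩ Iio m, e.G i) ∪ unboundedGap C)).Nonempty}

/-- Extended-real-valued inverse, with `0⁻¹ = ∞`. -/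
def invE (s : ℝ) : EReal := if s = 0 then ⊤ else ((s⁻¹ : ℝ) : EReal)

/-- Affine thickness `τ_A(C)` of `C` with respect to the diagonal matrix with entries `β`,
computed from the enumeration `e` of the bounded gaps of `C`. -/
def thicknessA {n : ℕ} (β : Fin n → ℝ) (C : Set (Fin n → ℝ)) (e : GapEnum β C) : EReal :=
  if e.J = ∅ then (if (interior C).Nonempty then ⊤ else ⊥)
  else if ∃ k ∈ e.J, gapDist β C e k = 0 then ⊥
  else ⨅ k ∈ e.J, (invE (sizeWrt β (e.G k)) - invE (gapDist β C e k))

/-- Open sets `U`, `V` are linked. -/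
def Linked {n : ℕ} (U V : Set (Fin n → ℝ)) : Prop :=
  (U ∩ V).Nonempty ∧ (frontier U \ V).Nonempty ∧ (frontier V \ U).Nonempty

/-- Compact sets `C₁`, `C₂` are BG linked. -/
def BGLinked {n : ℕ} (C₁ C₂ : Set (Fin n → ℝ)) : Prop :=
  ∀ G₁ G₂, IsBoundedGap C₁ G₁ → IsBoundedGap C₂ G₂ → Linked G₁ G₂ ∨ G₁ ∩ G₂ = ∅

/-- `C₁, C₂ ⊆ B[0,1]` are a strongly refinable pair for the diagonal matrix with entries `β`. -/
def StronglyRefinable {n : ℕ} (β : Fin n → ℝ) (C₁ C₂ : Set (Fin n → ℝ)) : Prop :=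
  ∃ C₁' C₂' : Set (Fin n → ℝ), IsCompact C₁' ∧ IsCompact C₂' ∧
    C₁' ⊆ closedBall 0 1 ∧ C₂' ⊆ closedBall 0 1 ∧
    BGLinked C₁' C₂' ∧
    (∃ G₁, IsBoundedGap C₁' G₁ ∧ ¬ frontier G₁ ⊆ unboundedGap C₂') ∧
    (∃ G₂, IsBoundedGap C₂' G₂ ∧ ¬ frontier G₂ ⊆ unboundedGap C₁') ∧
    (∀ e₁ : GapEnum β C₁, ∀ e₂ : GapEnum β C₂, ∃ e₁' : GapEnum β C₁', ∃ e₂' : GapEnum β C₂',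
      thicknessA β C₁ e₁ + thicknessA β C₂ e₂ ≤ thicknessA β C₁' e₁' + thicknessA β C₂' e₂') ∧
    C₁' ∩ C₂' ⊆ C₁ ∩ C₂

/-- The distance between two sets. -/
def setDist {n : ℕ} (A B : Set (Fin n → ℝ)) : ℝ :=
  sInf {r | ∃ a ∈ A, ∃ b ∈ B, r = dist a b}

/-- An enumeration of the bounded gaps of `C` in non-increasing order of diameter. -/
structure DiamEnum {n : ℕ} (C : Set (Fin n → ℝ)) where
  J : Set ℕ
  G : ℕ → Set (Fin n → ℝ)
  downward : ∀ k l : ℕ, k ≤ l → l ∈ J → k ∈ J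
  isGap : ∀ k ∈ J, IsBoundedGap C (G k)
  inj : ∀ k ∈ J, ∀ l ∈ J, G k = G l → k = l
  surj : ∀ G', IsBoundedGap C G' → ∃ k ∈ J, G k = G'
  anti : ∀ k ∈ J, ∀ l ∈ J, k ≤ l → Metric.diam (G l) ≤ Metric.diam (G k)

/-- The Falconer–Yavicoli thickness `τ(C)`, computed from the enumeration `e` of
the bounded gaps of `C` in non-increasing order of diameter. -/
def FYthickness {n : ℕ} (C : Set (Fin n → ℝ)) (e : DiamEnum C) : ℝ≥0∞ :=
  if e.J = ∅ then (if (interior C).Nonempty then ⊤ else 0)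
  else ⨅ k ∈ e.J, ENNReal.ofReal
    (setDist (e.G k) (unboundedGap C ∪ ⋃ j ∈ e.J ∩ Iio k, e.G j) / Metric.diam (e.G k))

end

/-! The refinement fills in every bounded gap of `C₁` whose closure lies in a gap of `C₂`, and
vice versa. Filling keeps the unbounded gap and removes only whole bounded gaps, so an enumeration
of the remaining gaps is a subsequence of the old one: sizes are unchanged and gap distances can
only grow, hence the thickness does not drop. The hypothesis on frontiers makes every pair of
remaining intersecting gaps linked, and a point filled on both sides would lie in a bounded
component that is both open and closed, so the intersection does not grow. -/

open Bornology

/-- The ray `{t • x | t ≥ 1}` escapes every ball while avoiding `closedBall 0 r`. -/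
theorem mem_closedBall_of_isBounded_connectedComponentIn {E : Type*} [NormedAddCommGroup E]
    [NormedSpace ℝ E] {C : Set E} {r : ℝ} (hr : 0 ≤ r)
    (hC : C ⊆ closedBall 0 r) {x : E} (hbd : IsBounded (connectedComponentIn Cᶜ x)) :
    x ∈ closedBall 0 r := by
  by_contra hx
  have hxr : r < ‖x‖ := by simpa using hx
  have hx0 : 0 < ‖x‖ := hr.trans_lt hxr
  have hray : (· • x) '' Ici (1 : ℝ) ⊆ connectedComponentIn Cᶜ x := by
    refine (isPreconnected_Ici.image _ (continuous_id.smul continuous_const).continuousOn)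
      |>.subset_connectedComponentIn ⟨1, self_mem_Ici, one_smul ℝ x⟩ ?_
    rintro _ ⟨t, ht, rfl⟩ hmem
    have h1 : ‖x‖ ≤ ‖t • x‖ := by
      rw [norm_smul, Real.norm_of_nonneg (zero_le_one.trans ht)]
      exact le_mul_of_one_le_left (norm_nonneg x) ht
    have h2 : ‖t • x‖ ≤ r := by simpa using hC hmem
    linarith
  obtain ⟨R, hR⟩ := isBounded_iff_forall_norm_le.1 (hbd.subset hray)
  set t := (|R| + 1) / ‖x‖ + 1
  have ht : 1 ≤ t := le_add_of_nonneg_left (by positivity)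
  have htx : ‖t • x‖ = |R| + 1 + ‖x‖ := by
    rw [norm_smul, Real.norm_of_nonneg (zero_le_one.trans ht), add_mul,
      div_mul_cancel₀ _ hx0.ne', one_mul]
  have := hR _ ⟨t, ht, rfl⟩
  linarith [le_abs_self R]

variable {n : ℕ}

theorem IsGap.nonempty {C G : Set (Fin n → ℝ)} (h : IsGap C G) : G.Nonempty := by
  obtain ⟨x, hx, rfl⟩ := h
  exact ⟨x, mem_connectedComponentIn hx⟩

theorem IsBoundedGap.subset_closedBall {C G : Set (Fin n → ℝ)} (hC : C ⊆ closedBall 0 1)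
    (h : IsBoundedGap C G) : G ⊆ closedBall 0 1 := by
  obtain ⟨⟨x, -, rfl⟩, hbd⟩ := h
  intro y hy
  rw [connectedComponentIn_eq hy] at hbd
  exact mem_closedBall_of_isBounded_connectedComponentIn zero_le_one hC hbd

theorem compl_closedBall_subset_unboundedGap {C : Set (Fin n → ℝ)} (hC : C ⊆ closedBall 0 1) :
    (closedBall 0 1)ᶜ ⊆ unboundedGap C := fun _ hx =>
  ⟨fun hxC => hx (hC hxC),
    fun hbd => hx (mem_closedBall_of_isBounded_connectedComponentIn zero_le_one hC hbd)⟩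

theorem exists_isGap_superset_of_dim_zero {C : Set (Fin 0 → ℝ)} {x : Fin 0 → ℝ} (hx : x ∉ C)
    (S : Set (Fin 0 → ℝ)) : ∃ G, IsGap C G ∧ S ⊆ G :=
  ⟨_, ⟨x, hx, rfl⟩, fun y _ => Subsingleton.elim x y ▸ mem_connectedComponentIn hx⟩

def fill (C D : Set (Fin n → ℝ)) : Set (Fin n → ℝ) :=
  C ∪ ⋃₀ {G | IsBoundedGap C G ∧ ∃ H, IsGap D H ∧ closure G ⊆ H}

section Fill

variable {C D : Set (Fin n → ℝ)} {x : Fin n → ℝ}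

theorem mem_fill_iff_of_notMem (hx : x ∉ C) :
    x ∈ fill C D ↔ IsBounded (connectedComponentIn Cᶜ x) ∧
      ∃ H, IsGap D H ∧ closure (connectedComponentIn Cᶜ x) ⊆ H := by
  simp only [fill, mem_union, hx, false_or, mem_sUnion, mem_ofPred_eq]
  constructor
  · rintro ⟨_, ⟨⟨⟨y, -, rfl⟩, hbd⟩, hcl⟩, hxG⟩
    rw [connectedComponentIn_eq hxG] at hbd hcl
    exact ⟨hbd, hcl⟩
  · rintro ⟨hbd, hcl⟩
    exact ⟨_, ⟨⟨⟨x, hx, rfl⟩, hbd⟩, hcl⟩, mem_connectedComponentIn hx⟩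

theorem closure_connectedComponentIn_subset_of_mem_fill (hx : x ∈ fill C D) (hxC : x ∉ C) :
    IsBounded (connectedComponentIn Cᶜ x) ∧
      closure (connectedComponentIn Cᶜ x) ⊆ connectedComponentIn Dᶜ x := by
  obtain ⟨hbd, _, ⟨y, -, rfl⟩, hcl⟩ := (mem_fill_iff_of_notMem hxC).1 hx
  rw [connectedComponentIn_eq (hcl (subset_closure (mem_connectedComponentIn hxC)))] at hcl
  exact ⟨hbd, hcl⟩

theorem mem_of_mem_fill_of_mem (hx : x ∈ fill C D) (hxD : x ∈ D) : x ∈ C := by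
  by_contra hxC
  have hxW := (closure_connectedComponentIn_subset_of_mem_fill hx hxC).2
    (subset_closure (mem_connectedComponentIn hxC))
  exact connectedComponentIn_subset _ _ hxW hxD

theorem connectedComponentIn_subset_compl_fill (hx : x ∉ fill C D) :
    connectedComponentIn Cᶜ x ⊆ (fill C D)ᶜ := by
  have hxC : x ∉ C := fun h => hx (subset_union_left h)
  intro y hy hyF
  have hyC : y ∉ C := connectedComponentIn_subset _ _ hy
  rw [mem_fill_iff_of_notMem hyC, ← connectedComponentIn_eq hy] at hyF
  exact hx ((mem_fill_iff_of_notMem hxC).2 hyF)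

theorem connectedComponentIn_compl_fill (hx : x ∉ fill C D) :
    connectedComponentIn (fill C D)ᶜ x = connectedComponentIn Cᶜ x :=
  subset_antisymm (connectedComponentIn_mono x (compl_subset_compl.2 subset_union_left))
    (isPreconnected_connectedComponentIn.subset_connectedComponentIn
      (mem_connectedComponentIn fun h => hx (subset_union_left h))
      (connectedComponentIn_subset_compl_fill hx))

theorem isBoundedGap_fill_iff {G : Set (Fin n → ℝ)} :
    IsBoundedGap (fill C D) G ↔ IsBoundedGap C G ∧ ¬ ∃ H, IsGap D H ∧ closure G ⊆ H := by
  constructor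
  · rintro ⟨⟨x, hx, rfl⟩, hbd⟩
    have hxC : x ∉ C := fun h => hx (subset_union_left h)
    rw [connectedComponentIn_compl_fill hx] at hbd ⊢
    exact ⟨⟨⟨x, hxC, rfl⟩, hbd⟩, fun h => hx ((mem_fill_iff_of_notMem hxC).2 ⟨hbd, h⟩)⟩
  · rintro ⟨⟨⟨x, hxC, rfl⟩, hbd⟩, hne⟩
    have hx : x ∉ fill C D := fun h => hne ((mem_fill_iff_of_notMem hxC).1 h).2
    exact ⟨⟨x, hx, (connectedComponentIn_compl_fill hx).symm⟩, hbd⟩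

theorem unboundedGap_fill : unboundedGap (fill C D) = unboundedGap C := by
  ext x
  constructor
  · rintro ⟨hx, hbd⟩
    exact ⟨fun h => hx (subset_union_left h), by rwa [connectedComponentIn_compl_fill hx] at hbd⟩
  · rintro ⟨hxC, hbd⟩
    have hx : x ∉ fill C D := fun h => hbd ((mem_fill_iff_of_notMem hxC).1 h).1
    exact ⟨hx, by rwa [connectedComponentIn_compl_fill hx]⟩

theorem isClosed_fill (hC : IsClosed C) : IsClosed (fill C D) :=
  isOpen_compl_iff.1 <| isOpen_iff_forall_mem_open.2 fun _ hx =>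
    ⟨_, connectedComponentIn_subset_compl_fill hx, hC.isOpen_compl.connectedComponentIn,
      mem_connectedComponentIn fun h => hx (subset_union_left h)⟩

theorem fill_subset_closedBall (hC : C ⊆ closedBall 0 1) : fill C D ⊆ closedBall 0 1 :=
  union_subset hC <| sUnion_subset fun _ hG => hG.1.subset_closedBall hC

theorem isCompact_fill (hC : IsClosed C) (hCb : C ⊆ closedBall 0 1) : IsCompact (fill C D) :=
  (isCompact_closedBall 0 1).of_isClosed_subset (isClosed_fill hC) (fill_subset_closedBall hCb)

end Fill

theorem fill_inter_fill_subset (hn : 0 < n) {C₁ C₂ : Set (Fin n → ℝ)} (hC₁ : IsClosed C₁) :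
    fill C₁ C₂ ∩ fill C₂ C₁ ⊆ C₁ ∩ C₂ := by
  rintro x ⟨h₁, h₂⟩
  suffices x ∈ C₁ ∨ x ∈ C₂ by
    rcases this with hx | hx
    · exact ⟨hx, mem_of_mem_fill_of_mem h₂ hx⟩
    · exact ⟨mem_of_mem_fill_of_mem h₁ hx, hx⟩
  by_contra! hx
  obtain ⟨hbd, h₁₂⟩ := closure_connectedComponentIn_subset_of_mem_fill h₁ hx.1
  have h₂₁ := (closure_connectedComponentIn_subset_of_mem_fill h₂ hx.2).2
  have hclosed : IsClosed (connectedComponentIn C₁ᶜ x) :=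
    isClosed_of_closure_subset (h₁₂.trans (subset_closure.trans h₂₁))
  have : Nonempty (Fin n) := ⟨⟨0, hn⟩⟩
  have huniv := IsClopen.eq_univ ⟨hclosed, hC₁.isOpen_compl.connectedComponentIn⟩
    ⟨x, mem_connectedComponentIn hx.1⟩
  exact NormedSpace.unbounded_univ ℝ _ (huniv ▸ hbd)

theorem bgLinked_fill {C₁ C₂ : Set (Fin n → ℝ)}
    (hbdry : ∀ G₁ G₂ : Set (Fin n → ℝ), IsBoundedGap C₁ G₁ → IsBoundedGap C₂ G₂ →
      (frontier G₁ ⊆ G₂ → G₁ ⊆ G₂) ∧ (frontier G₂ ⊆ G₁ → G₂ ⊆ G₁)) :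
    BGLinked (fill C₁ C₂) (fill C₂ C₁) := by
  intro G₁ G₂ h₁ h₂
  rw [or_iff_not_imp_right, ← ne_eq, ← nonempty_iff_ne_empty]
  intro hint
  obtain ⟨h₁, hne₁⟩ := isBoundedGap_fill_iff.1 h₁
  obtain ⟨h₂, hne₂⟩ := isBoundedGap_fill_iff.1 h₂
  refine ⟨hint, sdiff_nonempty.2 fun hsub => hne₁ ⟨G₂, h₂.1, ?_⟩,
    sdiff_nonempty.2 fun hsub => hne₂ ⟨G₁, h₁.1, ?_⟩⟩
  · exact closure_eq_self_union_frontier G₁ ▸ union_subset ((hbdry G₁ G₂ h₁ h₂).1 hsub) hsub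
  · exact closure_eq_self_union_frontier G₂ ▸ union_subset ((hbdry G₁ G₂ h₁ h₂).2 hsub) hsub

/-- For `(β j₀)^s > 1/2`, one of the boxes of scale `s` centred at `g ± (β j₀)^s e_{j₀}` contains
`g` and reaches outside `closedBall 0 1`: the points `g ± 2 (β j₀)^s e_{j₀}` are more than `2` apart
in coordinate `j₀`. -/
theorem exists_affBox_mem_diff_closedBall (hn : 0 < n) {β : Fin n → ℝ} (hβ : ∀ j, 0 < β j)
    (g : Fin n → ℝ) :
    ∃ t, 0 < t ∧ ∃ z, g ∈ affBox β (1 / t) z ∧ (affBox β (1 / t) z \ closedBall 0 1).Nonempty := by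
  set j₀ : Fin n := ⟨0, hn⟩
  obtain ⟨s, hs, hs0⟩ : ∃ s, 1 / 2 < β j₀ ^ s ∧ 0 < s :=
    (((Real.continuousAt_const_rpow (hβ j₀).ne').eventually
      (lt_mem_nhds (by norm_num : (1 : ℝ) / 2 < β j₀ ^ (0 : ℝ)))).filter_mono
      nhdsWithin_le_nhds |>.and self_mem_nhdsWithin).exists (f := 𝓝[>] 0)
  set v : Fin n → ℝ := Pi.single j₀ (β j₀ ^ s)
  have hbox : ∀ (ε : ℝ), |ε| ≤ 1 → ∀ z, z + ε • v ∈ affBox β s z := by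
    intro ε hε z j
    rcases eq_or_ne j j₀ with rfl | hj
    · simpa [v, abs_mul, abs_of_pos (Real.rpow_pos_of_pos (hβ _) s)] using
        mul_le_of_le_one_left (Real.rpow_pos_of_pos (hβ _) s).le hε
    · simpa [v, Pi.single_eq_of_ne hj] using (Real.rpow_pos_of_pos (hβ j) s).le
  have hout : ∃ ε : ℝ, |ε| = 1 ∧ g + (2 * ε) • v ∉ closedBall 0 1 := by
    by_contra! h
    have hcoord : ∀ ε : ℝ, |ε| = 1 → |g j₀ + 2 * ε * β j₀ ^ s| ≤ 1 := fun ε hε => by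
      simpa [v] using (norm_le_pi_norm (g + (2 * ε) • v) j₀).trans (by simpa using h ε hε)
    have hplus := hcoord 1 (by norm_num)
    have hminus := hcoord (-1) (by norm_num)
    rw [abs_le] at hplus hminus
    linarith
  obtain ⟨ε, hε, hp⟩ := hout
  refine ⟨1 / s, one_div_pos.2 hs0, g + ε • v, ?_, g + (2 * ε) • v, ?_, hp⟩ <;>
    rw [one_div_one_div]
  · simpa using hbox (-ε) (by rw [abs_neg, hε]) (g + ε • v)
  · convert hbox ε hε.le (g + ε • v) using 1
    module

theorem invE_anti {a b : ℝ} (ha : 0 < a) (h : a ≤ b) : invE b ≤ invE a := by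
  rw [invE, invE, if_neg ha.ne', if_neg (ha.trans_le h).ne']
  exact EReal.coe_le_coe_iff.2 (inv_anti₀ ha h)

theorem gapDist_nonneg {β : Fin n → ℝ} {C : Set (Fin n → ℝ)} (e : GapEnum β C) (m : ℕ) :
    0 ≤ gapDist β C e m :=
  Real.sInf_nonneg fun _ ht => ht.1.le

section Subenumeration

variable {β : Fin n → ℝ} {C C' : Set (Fin n → ℝ)}

theorem GapEnum.exists_subenum (e : GapEnum β C)
    (hgaps : ∀ G, IsBoundedGap C' G → IsBoundedGap C G) :
    ∃ (e' : GapEnum β C') (σ : ℕ → ℕ), MapsTo σ e'.J e.J ∧ StrictMonoOn σ e'.J ∧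
      ∀ m ∈ e'.J, e'.G m = e.G (σ m) := by
  set p : ℕ → Prop := fun k => k ∈ e.J ∧ IsBoundedGap C' (e.G k)
  set J' : Set ℕ := {m | ∀ hf : (Set.ofPred p).Finite, m < hf.toFinset.card}
  have hp : ∀ m ∈ J', p (Nat.nth p m) := fun m hm => Nat.nth_mem m hm
  have hmono : StrictMonoOn (Nat.nth p) J' := fun _ _ _ hl hkl => Nat.nth_lt_nth' hkl hl
  refine ⟨{ J := J'
            G := fun m => e.G (Nat.nth p m)
            downward := fun k l hkl hl hf => hkl.trans_lt (hl hf)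
            isGap := fun m hm => (hp m hm).2
            inj := fun k hk l hl hG =>
              hmono.injOn hk hl (e.inj _ (hp k hk).1 _ (hp l hl).1 hG)
            surj := fun G hG => ?_
            anti := fun k hk l hl hkl =>
              e.anti _ (hp k hk).1 _ (hp l hl).1 (hmono.monotoneOn hk hl hkl) },
    Nat.nth p, fun m hm => (hp m hm).1, hmono, fun _ _ => rfl⟩
  obtain ⟨k, hk, rfl⟩ := e.surj G (hgaps G hG)
  obtain ⟨m, hm, hnth⟩ := Nat.exists_lt_card_nth_eq (p := p) ⟨hk, hG⟩
  exact ⟨m, hm, by simp only [hnth]⟩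

variable (e : GapEnum β C) (e' : GapEnum β C') {σ : ℕ → ℕ}

/-- Earlier gaps of `e'` are earlier gaps of `e`, so every box admissible for `GD(m, C')` is
admissible for `GD(σ m, C)`. Admissible boxes for `C'` exist because `C'` lies in the unit
ball, so the infimum on the right is not the junk value `sInf ∅ = 0`. -/
theorem gapDist_le_gapDist_of_subenum (hn : 0 < n) (hβ : ∀ j, 0 < β j)
    (hC' : C' ⊆ closedBall 0 1) (hU : unboundedGap C' ⊆ unboundedGap C)
    (hσJ : MapsTo σ e'.J e.J) (hσ : StrictMonoOn σ e'.J) (hσG : ∀ m ∈ e'.J, e'.G m = e.G (σ m))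
    {m : ℕ} (hm : m ∈ e'.J) :
    gapDist β C e (σ m) ≤ gapDist β C' e' m := by
  have hbefore : (⋃ i ∈ e'.J ∩ Iio m, e'.G i) ∪ unboundedGap C' ⊆
      (⋃ k ∈ e.J ∩ Iio (σ m), e.G k) ∪ unboundedGap C := by
    refine union_subset_union (iUnion₂_subset fun i hi => ?_) hU
    rw [hσG i hi.1]
    exact subset_biUnion_of_mem (u := e.G) ⟨hσJ hi.1, hσ hi.1 hm hi.2⟩
  refine csInf_le_csInf ⟨0, fun _ ht => ht.1.le⟩ ?_ ?_
  · obtain ⟨g, hg⟩ := (e'.isGap m hm).1.nonempty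
    obtain ⟨t, ht, z, hgz, p, hpz, hp⟩ := exists_affBox_mem_diff_closedBall hn hβ g
    exact ⟨t, ht, z, ⟨g, hgz, hg⟩, p, hpz, Or.inr (compl_closedBall_subset_unboundedGap hC' hp)⟩
  · rintro t ⟨ht, z, hG, hbox⟩
    exact ⟨ht, z, hσG m hm ▸ hG, hbox.mono (inter_subset_inter_right _ hbefore)⟩

theorem thicknessA_le_thicknessA_of_subenum (hJ' : e'.J.Nonempty)
    (hσJ : MapsTo σ e'.J e.J) (hσG : ∀ m ∈ e'.J, e'.G m = e.G (σ m))
    (hgd : ∀ m ∈ e'.J, gapDist β C e (σ m) ≤ gapDist β C' e' m) :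
    thicknessA β C e ≤ thicknessA β C' e' := by
  obtain ⟨m₀, hm₀⟩ := hJ'
  have hJ : e.J ≠ ∅ := (nonempty_of_mem (hσJ hm₀)).ne_empty
  by_cases hz : ∃ k ∈ e.J, gapDist β C e k = 0
  · simp only [thicknessA, if_neg hJ, if_pos hz, bot_le]
  have hpos : ∀ k ∈ e.J, 0 < gapDist β C e k := fun k hk =>
    (gapDist_nonneg e k).lt_of_ne fun h => hz ⟨k, hk, h.symm⟩
  have hz' : ¬ ∃ m ∈ e'.J, gapDist β C' e' m = 0 := fun ⟨m, hm, h⟩ =>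
    (hpos _ (hσJ hm)).not_ge (h ▸ hgd m hm)
  rw [thicknessA, if_neg hJ, if_neg hz, thicknessA, if_neg (nonempty_of_mem hm₀).ne_empty,
    if_neg hz']
  refine le_iInf₂ fun m hm => (iInf₂_le (σ m) (hσJ hm)).trans ?_
  rw [hσG m hm]
  exact EReal.sub_le_sub le_rfl (invE_anti (hpos _ (hσJ hm)) (hgd m hm))

end Subenumeration

theorem exists_thicknessA_le_of_boundedGap_subset (hn : 0 < n) {β : Fin n → ℝ}
    (hβ : ∀ j, 0 < β j) {C C' : Set (Fin n → ℝ)} (hC' : C' ⊆ closedBall 0 1)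
    (hgaps : ∀ G, IsBoundedGap C' G → IsBoundedGap C G) (hU : unboundedGap C' ⊆ unboundedGap C)
    (hne : ∃ G, IsBoundedGap C' G) (e : GapEnum β C) :
    ∃ e' : GapEnum β C', thicknessA β C e ≤ thicknessA β C' e' := by
  obtain ⟨e', σ, hσJ, hσ, hσG⟩ := e.exists_subenum hgaps
  obtain ⟨G, hG⟩ := hne
  obtain ⟨m, hm, -⟩ := e'.surj G hG
  exact ⟨e', thicknessA_le_thicknessA_of_subenum e e' ⟨m, hm⟩ hσJ hσG
    fun m hm => gapDist_le_gapDist_of_subenum e e' hn hβ hC' hU hσJ hσ hσG hm⟩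

theorem exists_thicknessA_le_fill (hn : 0 < n) {β : Fin n → ℝ} (hβ : ∀ j, 0 < β j)
    {C D G : Set (Fin n → ℝ)} (hC : C ⊆ closedBall 0 1) (hG : IsBoundedGap (fill C D) G)
    (e : GapEnum β C) :
    ∃ e' : GapEnum β (fill C D), thicknessA β C e ≤ thicknessA β (fill C D) e' :=
  exists_thicknessA_le_of_boundedGap_subset hn hβ (fill_subset_closedBall hC)
    (fun _ hG => (isBoundedGap_fill_iff.1 hG).1) unboundedGap_fill.subset ⟨G, hG⟩ e

/-- a sufficient condition for strong refinability. -/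
theorem sufficient_condition_strongly_refinable (n : ℕ)
    (β : Fin n → ℝ) (hβ : ∀ j, β j ∈ Set.Ioo (0 : ℝ) 1)
    (C₁ C₂ : Set (Fin n → ℝ)) (hC₁ : IsCompact C₁) (hC₂ : IsCompact C₂)
    (hsub₁ : C₁ ⊆ closedBall 0 1) (hsub₂ : C₂ ⊆ closedBall 0 1)
    (hex : ∃ G₁ G₂ : Set (Fin n → ℝ), IsBoundedGap C₁ G₁ ∧ IsBoundedGap C₂ G₂ ∧
      (¬ ∃ G, IsGap C₂ G ∧ closure G₁ ⊆ G) ∧ (¬ ∃ G, IsGap C₁ G ∧ closure G₂ ⊆ G) ∧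
      ¬ frontier G₁ ⊆ unboundedGap C₂ ∧ ¬ frontier G₂ ⊆ unboundedGap C₁)
    (hbdry : ∀ G₁ G₂ : Set (Fin n → ℝ), IsBoundedGap C₁ G₁ → IsBoundedGap C₂ G₂ →
      (frontier G₁ ⊆ G₂ → G₁ ⊆ G₂) ∧ (frontier G₂ ⊆ G₁ → G₂ ⊆ G₁)) :
    StronglyRefinable β C₁ C₂ := by
  obtain ⟨G₁, G₂, hG₁, hG₂, hnc₁, hnc₂, hf₁, hf₂⟩ := hex
  have hn : 0 < n := by
    obtain ⟨⟨x, hx, -⟩, -⟩ := hG₁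
    exact Nat.pos_of_ne_zero fun h => by
      subst h
      exact hnc₂ (exists_isGap_superset_of_dim_zero hx _)
  have hβ₀ : ∀ j, 0 < β j := fun j => (hβ j).1
  have hG₁' : IsBoundedGap (fill C₁ C₂) G₁ := isBoundedGap_fill_iff.2 ⟨hG₁, hnc₁⟩
  have hG₂' : IsBoundedGap (fill C₂ C₁) G₂ := isBoundedGap_fill_iff.2 ⟨hG₂, hnc₂⟩
  refine ⟨fill C₁ C₂, fill C₂ C₁, isCompact_fill hC₁.isClosed hsub₁,
    isCompact_fill hC₂.isClosed hsub₂, fill_subset_closedBall hsub₁, fill_subset_closedBall hsub₂,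
    bgLinked_fill hbdry, ⟨G₁, hG₁', by rwa [unboundedGap_fill]⟩,
    ⟨G₂, hG₂', by rwa [unboundedGap_fill]⟩, fun e₁ e₂ => ?_, fill_inter_fill_subset hn hC₁.isClosed⟩
  obtain ⟨e₁', h₁⟩ := exists_thicknessA_le_fill hn hβ₀ hsub₁ hG₁' e₁
  obtain ⟨e₂', h₂⟩ := exists_thicknessA_le_fill hn hβ₀ hsub₂ hG₂' e₂
  exact ⟨e₁', e₂', add_le_add h₁ h₂⟩
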